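/- Let G = ⊕_{p∈I} V_p be a decomposition of a higher-order Lie algebra of order n into subspaces, with subsets i_{(p_1,...,p_n)} ⊆ I such that [V_{p_1},...,V_{p_n}] ⊆ ⊕_{r ∈ i_{(p_1,...,p_n)}} V_r. Let S = ∪_{p∈I} S_p be a subset decomposition of the commutative semigroup S which is in resonance: S_{p_1}·S_{p_2}⋯S_{p_n} ⊆ ∩_{r ∈ i_{(p_1,...,p_n)}} S_r. Then G_R = ⊕_{p∈I} S_p ⊗ V_p is closed under the S-expanded n-bracket: [W_{p_1},...,W_{p_n}]_S ⊆ G_R, where W_p = S_p ⊗ V_p; hence G_R is a submultialgebra of S⊗G. -/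

import Mathlib

/-- Generalized Jacobi identity for an alternating (m+1)-bracket. -/
def GJI {K G : Type*} [CommRing K] [AddCommGroup G] [Module K G] {m : ℕ}
    (B : AlternatingMap K G G (Fin (m + 1))) : Prop :=
  ∀ x : Fin (2 * m + 1) → G,
    ∑ σ : Equiv.Perm (Fin (2 * m + 1)), (Equiv.Perm.sign σ : ℤ) •
      B (Fin.cons (B fun j => x (σ (Fin.castLE (by omega) j)))
        (fun j : Fin m => x (σ ⟨m + 1 + j.1, by have := j.isLt; omega⟩))) = 0

/-- n-fold product in a (possibly non-unital) multiplicative structure. -/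
def sprod {S : Type*} [Mul S] {m : ℕ} (l : Fin (m + 1) → S) : S :=
  (List.ofFn fun j : Fin m => l j.succ).foldl (· * ·) (l 0)

/-- The generator `λ ⊗ x` of the S-expanded module `S ⊗ G` (modelled as the free
module `S →₀ G` on the semigroup S with coefficients in G). -/
noncomputable def gen {S G : Type*} [AddCommGroup G] (lam : S) (x : G) : S →₀ G :=
  Finsupp.single lam x

/-! A bracket of generators `λ_k ⊗ x_k` with `λ_k ∈ S_{p_k}`, `x_k ∈ V_{p_k}` equals
`(λ_1 ⋯ λ_n) ⊗ [x_1, …, x_n]`. The bracket `[x_1, …, x_n]` lies in `⊕_{r ∈ i_p} V_r`, and by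
resonance the product `λ_1 ⋯ λ_n` lies in every `S_r` with `r ∈ i_p`, so the result lies in
`⊕_{r ∈ i_p} S_r ⊗ V_r ⊆ G_R`. Multilinearity of the bracket extends this from generators to
their spans. -/

theorem MultilinearMap.map_mem_of_forall_mem_span {R ι N : Type*} {M : ι → Type*}
    [CommSemiring R] [∀ i, AddCommMonoid (M i)] [∀ i, Module R (M i)] [AddCommMonoid N]
    [Module R N] [Finite ι] (f : MultilinearMap R M N) (s : ∀ i, Set (M i))
    (T : Submodule R N) (hgen : ∀ g : ∀ i, M i, (∀ i, g i ∈ s i) → f g ∈ T)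
    (x : ∀ i, M i) (hx : ∀ i, x i ∈ Submodule.span R (s i)) : f x ∈ T := by
  classical
  have := Fintype.ofFinite ι
  suffices h : ∀ (t : Finset ι) (x : ∀ i, M i), (∀ i, x i ∈ Submodule.span R (s i)) →
      (∀ i ∉ t, x i ∈ s i) → f x ∈ T from h Finset.univ x hx (by simp)
  intro t
  induction t using Finset.induction_on with
  | empty => exact fun x _ hs => hgen x fun i => hs i (Finset.notMem_empty i)
  | insert a t _ ih =>
    intro x hx hs
    -- the `a`-th slot map is linear, so it suffices to treat `x a ∈ s a`
    have hslot : Submodule.span R (s a) ≤ T.comap (f.toLinearMap x a) := by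
      refine Submodule.span_le.mpr fun v hv => ih _ (fun i => ?_) (fun i hi => ?_)
      · rcases eq_or_ne i a with rfl | hne
        · simpa using Submodule.subset_span hv
        · simpa [hne] using hx i
      · rcases eq_or_ne i a with rfl | hne
        · simpa using hv
        · simpa [hne] using hs i (by simp [hne, hi])
    simpa using hslot (hx a)

/-- The paper's `S_p ⊗ V_p`, for `s = S_p` and `V = V_p`. -/
noncomputable def tensorSpan (K : Type*) {S G : Type*} [Semiring K] [AddCommGroup G]
    [Module K G] (s : Set S) (V : Submodule K G) : Submodule K (S →₀ G) :=
  Submodule.span K {e | ∃ lam ∈ s, ∃ v ∈ V, e = gen lam v}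

theorem gen_mem_iSup_tensorSpan {K G S I : Type*} [Semiring K] [AddCommGroup G] [Module K G]
    (V : I → Submodule K G) (Sp : I → Set S) (J : Set I) {mu : S}
    (hmu : mu ∈ ⋂ r ∈ J, Sp r) {w : G} (hw : w ∈ ⨆ r ∈ J, V r) :
    gen mu w ∈ ⨆ q, tensorSpan K (Sp q) (V q) := by
  have hle : ⨆ r ∈ J, V r ≤ (⨆ q, tensorSpan K (Sp q) (V q)).comap (Finsupp.lsingle mu) :=
    iSup₂_le fun r hr v hv => Submodule.mem_iSup_of_mem r <|
      Submodule.subset_span ⟨mu, Set.mem_iInter₂.mp hmu r hr, v, hv, rfl⟩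
  exact hle hw

theorem iSup_tensorSpan_eq_span_iUnion {K G S I : Type*} [Semiring K] [AddCommGroup G]
    [Module K G] (V : I → Submodule K G) (Sp : I → Set S) :
    ⨆ q, tensorSpan K (Sp q) (V q) =
      Submodule.span K (⋃ q, {e | ∃ lam ∈ Sp q, ∃ v ∈ V q, e = gen lam v}) :=
  (Submodule.span_iUnion _).symm

theorem resonant_submultialgebra_general {K G S I : Type*} [Field K] [AddCommGroup G] [Module K G]
    [CommSemigroup S] (m : ℕ)
    (B : AlternatingMap K G G (Fin (m + 1)))
    (V : I → Submodule K G) (ind : (Fin (m + 1) → I) → Set I)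
    (hstruct : ∀ (p : Fin (m + 1) → I) (x : Fin (m + 1) → G),
      (∀ k, x k ∈ V (p k)) → B x ∈ ⨆ r ∈ ind p, V r)
    (Sp : I → Set S)
    (hres : ∀ (p : Fin (m + 1) → I) (lam : Fin (m + 1) → S),
      (∀ k, lam k ∈ Sp (p k)) → sprod lam ∈ ⋂ r ∈ ind p, Sp r)
    (Bexp : AlternatingMap K (S →₀ G) (S →₀ G) (Fin (m + 1)))
    (hBexp : ∀ (lam : Fin (m + 1) → S) (x : Fin (m + 1) → G),
      Bexp (fun k => gen (lam k) (x k)) = gen (sprod lam) (B x)) :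
    (∀ (p : Fin (m + 1) → I) (x : Fin (m + 1) → (S →₀ G)),
      (∀ k, x k ∈ Submodule.span K
        {e | ∃ lam ∈ Sp (p k), ∃ v ∈ V (p k), e = gen lam v}) →
      Bexp x ∈ ⨆ q, Submodule.span K
        {e | ∃ lam ∈ Sp q, ∃ v ∈ V q, e = gen lam v}) ∧
    (∀ x : Fin (m + 1) → (S →₀ G),
      (∀ k, x k ∈ ⨆ q, Submodule.span K
        {e | ∃ lam ∈ Sp q, ∃ v ∈ V q, e = gen lam v}) →
      Bexp x ∈ ⨆ q, Submodule.span K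
        {e | ∃ lam ∈ Sp q, ∃ v ∈ V q, e = gen lam v}) := by
  set A : I → Set (S →₀ G) := fun q => {e | ∃ lam ∈ Sp q, ∃ v ∈ V q, e = gen lam v}
  have bracket_gen_mem : ∀ (p : Fin (m + 1) → I) (g : Fin (m + 1) → S →₀ G),
      (∀ k, g k ∈ A (p k)) → Bexp g ∈ ⨆ q, tensorSpan K (Sp q) (V q) := by
    intro p g hg
    choose lam hlam v hv hgv using hg
    rw [funext hgv, hBexp]
    exact gen_mem_iSup_tensorSpan V Sp (ind p) (hres p lam hlam) (hstruct p v hv)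
  refine ⟨fun p x hx => ?_, fun x hx => ?_⟩
  · exact Bexp.toMultilinearMap.map_mem_of_forall_mem_span _ _ (bracket_gen_mem p) x hx
  · have hx' : ∀ k, x k ∈ Submodule.span K (⋃ q, A q) :=
      fun k => iSup_tensorSpan_eq_span_iUnion V Sp ▸ hx k
    refine Bexp.toMultilinearMap.map_mem_of_forall_mem_span _ _ (fun g hg => ?_) x hx'
    choose p hp using fun k => Set.mem_iUnion.mp (hg k)
    exact bracket_gen_mem p g hp

/-- the resonant subspace `G_R = ⊕_p S_p ⊗ V_p` is closed under the
S-expanded bracket: `[W_{p_1},...,W_{p_n}]_S ⊆ G_R`, hence `G_R` is a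
submultialgebra of `S ⊗ G`. -/
theorem resonant_submultialgebra {K G S I : Type*} [Field K] [AddCommGroup G] [Module K G]
    [CommSemigroup S] (m : ℕ) (hn : Even (m + 1))
    (B : AlternatingMap K G G (Fin (m + 1))) (hB : GJI B)
    (V : I → Submodule K G) (ind : (Fin (m + 1) → I) → Set I)
    (hstruct : ∀ (p : Fin (m + 1) → I) (x : Fin (m + 1) → G),
      (∀ k, x k ∈ V (p k)) → B x ∈ ⨆ r ∈ ind p, V r)
    (Sp : I → Set S)
    (hres : ∀ (p : Fin (m + 1) → I) (lam : Fin (m + 1) → S),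
      (∀ k, lam k ∈ Sp (p k)) → sprod lam ∈ ⋂ r ∈ ind p, Sp r)
    (Bexp : AlternatingMap K (S →₀ G) (S →₀ G) (Fin (m + 1)))
    (hBexp : ∀ (lam : Fin (m + 1) → S) (x : Fin (m + 1) → G),
      Bexp (fun k => gen (lam k) (x k)) = gen (sprod lam) (B x)) :
    (∀ (p : Fin (m + 1) → I) (x : Fin (m + 1) → (S →₀ G)),
      (∀ k, x k ∈ Submodule.span K
        {e | ∃ lam ∈ Sp (p k), ∃ v ∈ V (p k), e = gen lam v}) →
      Bexp x ∈ ⨆ q, Submodule.span K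
        {e | ∃ lam ∈ Sp q, ∃ v ∈ V q, e = gen lam v}) ∧
    (∀ x : Fin (m + 1) → (S →₀ G),
      (∀ k, x k ∈ ⨆ q, Submodule.span K
        {e | ∃ lam ∈ Sp q, ∃ v ∈ V q, e = gen lam v}) →
      Bexp x ∈ ⨆ q, Submodule.span K
        {e | ∃ lam ∈ Sp q, ∃ v ∈ V q, e = gen lam v}) :=
  resonant_submultialgebra_general m B V ind hstruct Sp hres Bexp hBexp
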